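/- arXiv:1411.1488 — 2 statements merged into one kernel-verified Lean document; each statement's English description precedes it below -/
import Mathlib

section
/- Let R be a subspace of ℝ^k of dimension t' with a basis {r_1,…,r_{t'}} such that each ‖r_i‖_∞ ≤ Δ/√k and ‖r_i‖₂ = 1. Then for any vector p ∈ ℝ^k, the projection onto the orthogonal complement of R satisfies ‖P_{⊥R} p‖_∞ ≤ ‖p‖_∞ + ‖p‖₂ · Δ · √(t')/√k. -/
/-! Write `P_{⊥R} p = p - ∑ ⟪r i, p⟫ r i`. Each coordinate of the subtracted sum is at most
`(∑ |⟪r i, p⟫|) · Δ/√k`, and by Cauchy–Schwarz and Bessel's inequality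
`∑ |⟪r i, p⟫| ≤ √t' · (∑ ⟪r i, p⟫²)^½ ≤ √t' · ‖p‖`. -/

open Finset RealInnerProductSpace

theorem Orthonormal.sum_abs_inner_le {ι E : Type*} [Fintype ι] [NormedAddCommGroup E]
    [InnerProductSpace ℝ E] {v : ι → E} (hv : Orthonormal ℝ v) (x : E) :
    ∑ i, |⟪v i, x⟫| ≤ √(Fintype.card ι) * ‖x‖ := by
  have bessel : ∑ i, ⟪v i, x⟫ ^ 2 ≤ ‖x‖ ^ 2 := by
    simpa [Real.norm_eq_abs, sq_abs] using hv.sum_inner_products_le (s := univ) x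
  have cauchy_schwarz := sq_sum_le_card_mul_sum_sq (s := univ) (f := fun i ↦ |⟪v i, x⟫|)
  simp only [card_univ, sq_abs] at cauchy_schwarz
  refine le_of_sq_le_sq ?_ (by positivity)
  calc (∑ i, |⟪v i, x⟫|) ^ 2 ≤ Fintype.card ι * ‖x‖ ^ 2 :=
        cauchy_schwarz.trans (mul_le_mul_of_nonneg_left bessel (Nat.cast_nonneg _))
    _ = (√(Fintype.card ι) * ‖x‖) ^ 2 := by rw [mul_pow, Real.sq_sqrt (Nat.cast_nonneg _)]

theorem EuclideanSpace.abs_sum_smul_apply_le {ι n : Type*} [Fintype ι] (c : ι → ℝ)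
    (v : ι → EuclideanSpace ℝ n) (j : n) {B : ℝ} (hB : ∀ i, |v i j| ≤ B) :
    |(∑ i, c i • v i) j| ≤ (∑ i, |c i|) * B := by
  simp only [WithLp.ofLp_sum, Finset.sum_apply, PiLp.smul_apply, smul_eq_mul]
  calc |∑ i, c i * v i j| ≤ ∑ i, |c i| * |v i j| := by
        simp only [← abs_mul]; exact abs_sum_le_sum_abs _ _
    _ ≤ ∑ i, |c i| * B := by gcongr with i; exact hB i
    _ = (∑ i, |c i|) * B := (sum_mul ..).symm

theorem Orthonormal.abs_sum_inner_smul_apply_le {ι n : Type*} [Fintype ι] [Fintype n]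
    {v : ι → EuclideanSpace ℝ n} (hv : Orthonormal ℝ v) (x : EuclideanSpace ℝ n) (j : n)
    {B : ℝ} (hB : ∀ i, |v i j| ≤ B) :
    |(∑ i, ⟪v i, x⟫ • v i) j| ≤ √(Fintype.card ι) * ‖x‖ * B := by
  rcases isEmpty_or_nonempty ι with _ | ⟨⟨i₀⟩⟩
  · simp
  have hB₀ : 0 ≤ B := (abs_nonneg _).trans (hB i₀)
  calc |(∑ i, ⟪v i, x⟫ • v i) j| ≤ (∑ i, |⟪v i, x⟫|) * B :=
        EuclideanSpace.abs_sum_smul_apply_le _ v j hB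
    _ ≤ √(Fintype.card ι) * ‖x‖ * B := by gcongr; exact hv.sum_abs_inner_le x

theorem proj_linf_bound_general (k t' : ℕ) (Δ : ℝ)
    (r : Fin t' → EuclideanSpace ℝ (Fin k)) (horth : Orthonormal ℝ r)
    (hinf : ∀ (i : Fin t') (j : Fin k), |r i j| ≤ Δ / Real.sqrt k)
    (p : EuclideanSpace ℝ (Fin k)) :
    ∀ j : Fin k,
      |(p - ∑ i, (inner ℝ (r i) p : ℝ) • r i) j|
        ≤ (⨆ l, |p l|) + ‖p‖ * Δ * Real.sqrt t' / Real.sqrt k := by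
  intro j
  have hp : |p j| ≤ ⨆ l, |p l| := le_ciSup (f := fun l ↦ |p l|) (Set.finite_range _).bddAbove j
  have hproj := horth.abs_sum_inner_smul_apply_le p j (hinf · j)
  rw [Fintype.card_fin] at hproj
  calc |(p - ∑ i, (inner ℝ (r i) p : ℝ) • r i) j|
      ≤ |p j| + |(∑ i, (inner ℝ (r i) p : ℝ) • r i) j| := abs_sub _ _
    _ ≤ (⨆ l, |p l|) + √t' * ‖p‖ * (Δ / √k) := add_le_add hp hproj
    _ = (⨆ l, |p l|) + ‖p‖ * Δ * Real.sqrt t' / Real.sqrt k := by ring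

/-- ℓ∞ bound for projection orthogonal to a subspace with an orthonormal basis
of entrywise small vectors: ‖P_{⊥R} p‖_∞ ≤ ‖p‖_∞ + ‖p‖·Δ·√t'/√k. -/
theorem proj_linf_bound (k t' : ℕ) (Δ : ℝ)
    (r : Fin t' → EuclideanSpace ℝ (Fin k)) (horth : Orthonormal ℝ r)
    (hunit : ∀ i, ‖r i‖ = 1)
    (hinf : ∀ (i : Fin t') (j : Fin k), |r i j| ≤ Δ / Real.sqrt k)
    (p : EuclideanSpace ℝ (Fin k)) :
    ∀ j : Fin k,
      |(p - ∑ i, (inner ℝ (r i) p : ℝ) • r i) j|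
        ≤ (⨆ l, |p l|) + ‖p‖ * Δ * Real.sqrt t' / Real.sqrt k :=
  proj_linf_bound_general k t' Δ r horth hinf p
end

section
/- Let n^{(i)}, n^{(i₁)}, n^{(i₂)} ∈ ℝ^k be independent Gaussian random vectors each with covariance (1/d)·I (where the indices i, i₁, i₂ are distinct, or any ordering). Then with probability 1 − o(1), |⟨n^{(i)}, n^{(i₁)} * n^{(i₂)}⟩| ≤ O(√k · (log k) / d^{3/2}). -/
/-!
Regrouping the three vectors coordinatewise, the inner product is a sum of `k` independent copies
of a product of three independent centred Gaussians of variance `1/d`; such a product has mean `0`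
and variance `1/d³`. Chebyshev's inequality at the threshold `√k log k / d^{3/2}` bounds the
failure probability by `1 / (log k)²`, which tends to `0`.
-/

open MeasureTheory ProbabilityTheory Filter
open scoped NNReal ENNReal

section
variable {ι : Type*} [Fintype ι] {Ω : ι → Type*} {mΩ : ∀ i, MeasurableSpace (Ω i)}
  {μ : (i : ι) → Measure (Ω i)} [∀ i, IsProbabilityMeasure (μ i)] {X : Π i, Ω i → ℝ}

theorem meas_ge_abs_sum_pi_le_sum_variance_div_sq (hX : ∀ i, MemLp (X i) 2 (μ i))
    (hmean : ∀ i, (μ i)[X i] = 0) {c : ℝ} (hc : 0 < c) :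
    Measure.pi μ {ω | c ≤ |∑ i, X i (ω i)|} ≤
      ENNReal.ofReal ((∑ i, Var[X i; μ i]) / c ^ 2) := by
  set S : (Π i, Ω i) → ℝ := ∑ i, fun ω ↦ X i (ω i) with hS
  have hS_apply : ∀ ω, S ω = ∑ i, X i (ω i) := fun ω ↦ by simp [hS]
  have hS_memLp : MemLp S 2 (Measure.pi μ) :=
    memLp_finsetSum' _ fun i _ ↦ (hX i).comp_measurePreserving (measurePreserving_eval _ i)
  have hS_mean : (Measure.pi μ)[S] = 0 := by
    simp_rw [hS_apply]
    have hint : ∀ i, Integrable (fun ω : Π i, Ω i ↦ X i (ω i)) (Measure.pi μ) := fun i ↦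
      ((hX i).comp_measurePreserving (measurePreserving_eval _ i)).integrable one_le_two
    rw [integral_finsetSum _ fun i _ ↦ hint i]
    simp [integral_comp_eval (hX _).aestronglyMeasurable, hmean]
  have := meas_ge_le_variance_div_sq hS_memLp hc
  rw [hS_mean, variance_sum_pi hX] at this
  simpa [hS_apply] using this
end

section
variable {μ₁ μ₂ μ₃ : Measure ℝ}

theorem memLp_two_mul_mul_prod (h₁ : MemLp id 2 μ₁) (h₂ : MemLp id 2 μ₂) (h₃ : MemLp id 2 μ₃) :
    MemLp (fun x : ℝ × ℝ × ℝ ↦ x.1 * x.2.1 * x.2.2) 2 (μ₁.prod (μ₂.prod μ₃)) := by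
  refine (memLp_two_iff_integrable_sq (by fun_prop)).2 ?_
  have hsq : ∀ {μ : Measure ℝ}, MemLp id 2 μ → Integrable (fun x : ℝ ↦ x ^ 2) μ :=
    fun h ↦ (memLp_two_iff_integrable_sq aestronglyMeasurable_id).1 h
  simpa only [mul_pow, mul_assoc] using (hsq h₁).mul_prod ((hsq h₂).mul_prod (hsq h₃))

theorem integral_mul_mul_prod [SFinite μ₁] [SFinite μ₂] [SFinite μ₃] :
    ∫ x : ℝ × ℝ × ℝ, x.1 * x.2.1 * x.2.2 ∂(μ₁.prod (μ₂.prod μ₃)) =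
      (∫ x, x ∂μ₁) * (∫ x, x ∂μ₂) * ∫ x, x ∂μ₃ := by
  simp_rw [mul_assoc]
  rw [integral_prod_mul (fun x : ℝ ↦ x) (fun y : ℝ × ℝ ↦ y.1 * y.2),
    integral_prod_mul (fun x : ℝ ↦ x) (fun x : ℝ ↦ x)]

theorem variance_mul_mul_prod_of_integral_eq_zero [SFinite μ₁] [SFinite μ₂] [SFinite μ₃]
    (m₁ : ∫ x, x ∂μ₁ = 0) (m₂ : ∫ x, x ∂μ₂ = 0) (m₃ : ∫ x, x ∂μ₃ = 0) :
    Var[fun x : ℝ × ℝ × ℝ ↦ x.1 * x.2.1 * x.2.2; μ₁.prod (μ₂.prod μ₃)] =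
      Var[id; μ₁] * Var[id; μ₂] * Var[id; μ₃] := by
  rw [variance_of_integral_eq_zero (by fun_prop) (by simp [integral_mul_mul_prod, m₁]),
    variance_of_integral_eq_zero aemeasurable_id m₁,
    variance_of_integral_eq_zero aemeasurable_id m₂,
    variance_of_integral_eq_zero aemeasurable_id m₃]
  simp_rw [mul_pow, mul_assoc]
  rw [integral_prod_mul (fun x : ℝ ↦ x ^ 2) (fun y : ℝ × ℝ ↦ y.1 ^ 2 * y.2 ^ 2),
    integral_prod_mul (fun x : ℝ ↦ x ^ 2) (fun x : ℝ ↦ x ^ 2)]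
  rfl
end

theorem measurePreserving_pi_prod_prod (α β γ ι : Type*) [MeasurableSpace α]
    [MeasurableSpace β] [MeasurableSpace γ] [Fintype ι] (μ : Measure α) (ν : Measure β)
    (ρ : Measure γ) [SigmaFinite μ] [SigmaFinite ν] [SigmaFinite ρ] :
    MeasurePreserving (fun ω : ι → α × β × γ ↦
        (fun i ↦ (ω i).1, fun i ↦ (ω i).2.1, fun i ↦ (ω i).2.2))
      (Measure.pi fun _ ↦ μ.prod (ν.prod ρ))
      ((Measure.pi fun _ ↦ μ).prod ((Measure.pi fun _ ↦ ν).prod (Measure.pi fun _ ↦ ρ))) :=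
  (MeasurePreserving.id _ |>.prod
    (measurePreserving_arrowProdEquivProdArrow β γ ι (fun _ ↦ ν) fun _ ↦ ρ)).comp
    (measurePreserving_arrowProdEquivProdArrow α (β × γ) ι (fun _ ↦ μ) fun _ ↦ ν.prod ρ)

theorem tendsto_measure_one_of_measure_compl_le {α : Type*} {l : Filter α} {Ω : α → Type*}
    [∀ a, MeasurableSpace (Ω a)] {P : ∀ a, Measure (Ω a)} [∀ a, IsProbabilityMeasure (P a)]
    {s : ∀ a, Set (Ω a)} {ε : α → ℝ≥0∞} (hε : Tendsto ε l (nhds 0))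
    (h : ∀ᶠ a in l, P a (s a)ᶜ ≤ ε a) :
    Tendsto (fun a ↦ P a (s a)) l (nhds 1) := by
  have hlow : Tendsto (fun a ↦ 1 - ε a) l (nhds 1) := by
    simpa using ENNReal.Tendsto.sub tendsto_const_nhds hε (Or.inl ENNReal.one_ne_top)
  refine tendsto_of_tendsto_of_tendsto_of_le_of_le' hlow tendsto_const_nhds ?_
    (Eventually.of_forall fun _ ↦ prob_le_one)
  filter_upwards [h] with a ha
  calc 1 - ε a ≤ 1 - P a (s a)ᶜ := tsub_le_tsub_left ha 1
    _ ≤ P a (s a) := by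
      rw [tsub_le_iff_right, ← measure_univ (μ := P a)]
      exact measure_univ_le_add_compl _

theorem variance_mul_mul_gaussianReal (v₁ v₂ v₃ : ℝ≥0) :
    Var[fun x : ℝ × ℝ × ℝ ↦ x.1 * x.2.1 * x.2.2;
      (gaussianReal 0 v₁).prod ((gaussianReal 0 v₂).prod (gaussianReal 0 v₃))] = v₁ * v₂ * v₃ := by
  simp only [variance_mul_mul_prod_of_integral_eq_zero integral_id_gaussianReal
    integral_id_gaussianReal integral_id_gaussianReal, variance_id_gaussianReal]

theorem mul_inv_cube_div_sq_eq_inv_log_sq {k d : ℝ} (hk : 0 ≤ k) (hd : 0 < d) :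
    k * (d⁻¹ * d⁻¹ * d⁻¹) / (1 * √k * Real.log k / d ^ ((3 : ℝ) / 2)) ^ 2 =
      (Real.log k ^ 2)⁻¹ := by
  have hd3 : (d ^ ((3 : ℝ) / 2)) ^ 2 = d ^ 3 := by
    rw [← Real.rpow_natCast, ← Real.rpow_mul hd.le]; norm_num
  rw [div_pow, hd3, mul_pow, mul_pow, Real.sq_sqrt hk]
  rcases hk.eq_or_lt with rfl | hk
  · simp
  field_simp

/-- For three independent Gaussian vectors in ℝ^k with covariance (1/d)I,
with probability 1 − o(1) as k → ∞,
|⟨n⁽ⁱ⁾, n⁽ⁱ¹⁾ * n⁽ⁱ²⁾⟩| ≤ O(√k · log k / d^{3/2}). -/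
theorem triple_hadamard_inner_whp (dd : ℕ → ℕ) (hdd : ∀ k, 1 ≤ dd k) :
    ∃ C : ℝ, 0 < C ∧
      Tendsto (fun k : ℕ =>
          (((Measure.pi fun _ : Fin k => gaussianReal 0 (dd k : ℝ≥0)⁻¹)).prod
            (((Measure.pi fun _ : Fin k => gaussianReal 0 (dd k : ℝ≥0)⁻¹)).prod
              ((Measure.pi fun _ : Fin k => gaussianReal 0 (dd k : ℝ≥0)⁻¹))))
            {p : (Fin k → ℝ) × (Fin k → ℝ) × (Fin k → ℝ) |
              |∑ j, p.1 j * p.2.1 j * p.2.2 j|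
                ≤ C * Real.sqrt k * Real.log k / (dd k : ℝ) ^ ((3 : ℝ) / 2)})
        atTop (nhds 1) := by
  refine ⟨1, one_pos, tendsto_measure_one_of_measure_compl_le
    (ε := fun k : ℕ ↦ ENNReal.ofReal (Real.log k ^ 2)⁻¹) ?_ ?_⟩
  · simpa using ENNReal.tendsto_ofReal ((tendsto_pow_atTop two_ne_zero).comp
      (Real.tendsto_log_atTop.comp tendsto_natCast_atTop_atTop)).inv_tendsto_atTop
  filter_upwards [eventually_gt_atTop 1] with k hk
  set g := gaussianReal 0 (dd k : ℝ≥0)⁻¹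
  set c := 1 * √k * Real.log k / (dd k : ℝ) ^ ((3 : ℝ) / 2)
  have hd : (0 : ℝ) < dd k := by exact_mod_cast hdd k
  have hc : 0 < c := by
    have : 0 < Real.log k := Real.log_pos (by exact_mod_cast hk)
    positivity
  have hg : MemLp id 2 g := memLp_id_gaussianReal 2
  calc _ ≤ ((Measure.pi fun _ ↦ g).prod ((Measure.pi fun _ ↦ g).prod (Measure.pi fun _ ↦ g)))
        {p | c ≤ |∑ j, p.1 j * p.2.1 j * p.2.2 j|} :=
      measure_mono fun _ ↦ by simpa using le_of_lt
    _ = Measure.pi (fun _ : Fin k ↦ g.prod (g.prod g))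
        {ω | c ≤ |∑ j, (ω j).1 * (ω j).2.1 * (ω j).2.2|} :=
      ((measurePreserving_pi_prod_prod ℝ ℝ ℝ (Fin k) g g g).measure_preimage
        (measurableSet_le measurable_const (by fun_prop)).nullMeasurableSet).symm
    _ ≤ _ := meas_ge_abs_sum_pi_le_sum_variance_div_sq
        (fun _ ↦ memLp_two_mul_mul_prod hg hg hg) (fun _ ↦ by simp [integral_mul_mul_prod, g]) hc
    _ = _ := by
      simp only [g, variance_mul_mul_gaussianReal, Finset.sum_const, Finset.card_univ,
        Fintype.card_fin, nsmul_eq_mul, NNReal.coe_inv, NNReal.coe_natCast]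
      rw [mul_inv_cube_div_sq_eq_inv_log_sq (Nat.cast_nonneg k) hd]
end
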